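/- arXiv:2408.08980 — 6 statements merged into one kernel-verified Lean document; each statement's English description precedes it below -/
import Mathlib

section
/- Let $(T,\ell,e,\mu,\eta,\varsigma)$ be an oplax monoidal symmetric monad on a monoidal category $(\mathcal{C},\otimes,I)$, and let $G_1, G_2$ be endofunctors on $\mathcal{C}$. If $\psi_1: TG_1\to G_1T$ and $\psi_2: TG_2\to G_2T$ are symmetric distributive laws, then the composite $\psi_{1,2} = (\psi_1\otimes\psi_2)\circ\ell_{G_1,G_2}: T(G_1\otimes G_2)\to (G_1\otimes G_2)T$ (where $(G_1\otimes G_2)(X) = G_1(X)\otimes G_2(X)$) is a symmetric distributive law between $T$ and the endofunctor $G_1\otimes G_2$. -/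
open CategoryTheory MonoidalCategory

/-!
Both components of `ψ = ℓ ≫ (ψ₁ ⊗ₘ ψ₂)` act separately after `ℓ`, so each axiom for `ψ`
reduces to the corresponding axiom for `ψ₁` and `ψ₂` once `ℓ` has been moved past the
relevant structure map: past `T`-images of morphisms by naturality of `ℓ`, and past `μ`,
`η`, `ς` by the oplax compatibilities of `ℓ`. The only non-trivial bookkeeping is that
applying `ψ` twice factors as `T ℓ ≫ ℓ ≫ ((T ψ₁ ≫ ψ₁) ⊗ₘ (T ψ₂ ≫ ψ₂))`.
-/

namespace TensorDistribLaw

variable {C : Type*} [Category C] [MonoidalCategory C] {T : C ⥤ C}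
  {ℓ : ∀ A B : C, T.obj (A ⊗ B) ⟶ T.obj A ⊗ T.obj B} {G₁ G₂ : C ⥤ C}
  {ψ₁ : ∀ X : C, T.obj (G₁.obj X) ⟶ G₁.obj (T.obj X)}
  {ψ₂ : ∀ X : C, T.obj (G₂.obj X) ⟶ G₂.obj (T.obj X)}

variable (ℓ ψ₁ ψ₂) in
def tensorLaw (X : C) : T.obj (G₁.obj X ⊗ G₂.obj X) ⟶ G₁.obj (T.obj X) ⊗ G₂.obj (T.obj X) :=
  ℓ (G₁.obj X) (G₂.obj X) ≫ (ψ₁ X ⊗ₘ ψ₂ X)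

theorem tensorLaw_naturality
    (hℓnat : ∀ {A B A' B' : C} (f : A ⟶ A') (g : B ⟶ B'),
      T.map (f ⊗ₘ g) ≫ ℓ A' B' = ℓ A B ≫ (T.map f ⊗ₘ T.map g))
    (hψ₁nat : ∀ {X Y : C} (f : X ⟶ Y), T.map (G₁.map f) ≫ ψ₁ Y = ψ₁ X ≫ G₁.map (T.map f))
    (hψ₂nat : ∀ {X Y : C} (f : X ⟶ Y), T.map (G₂.map f) ≫ ψ₂ Y = ψ₂ X ≫ G₂.map (T.map f))
    {X Y : C} (f : X ⟶ Y) :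
    T.map (G₁.map f ⊗ₘ G₂.map f) ≫ tensorLaw ℓ ψ₁ ψ₂ Y
      = tensorLaw ℓ ψ₁ ψ₂ X ≫ (G₁.map (T.map f) ⊗ₘ G₂.map (T.map f)) := by
  simp only [tensorLaw, reassoc_of% hℓnat, Category.assoc, tensorHom_comp_tensorHom, hψ₁nat,
    hψ₂nat]

theorem map_tensorLaw_comp_tensorLaw
    (hℓnat : ∀ {A B A' B' : C} (f : A ⟶ A') (g : B ⟶ B'),
      T.map (f ⊗ₘ g) ≫ ℓ A' B' = ℓ A B ≫ (T.map f ⊗ₘ T.map g))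
    (X : C) :
    T.map (tensorLaw ℓ ψ₁ ψ₂ X) ≫ tensorLaw ℓ ψ₁ ψ₂ (T.obj X)
      = T.map (ℓ (G₁.obj X) (G₂.obj X)) ≫ ℓ (T.obj (G₁.obj X)) (T.obj (G₂.obj X))
          ≫ ((T.map (ψ₁ X) ≫ ψ₁ (T.obj X)) ⊗ₘ (T.map (ψ₂ X) ≫ ψ₂ (T.obj X))) := by
  simp only [tensorLaw, Functor.map_comp, Category.assoc, reassoc_of% hℓnat,
    tensorHom_comp_tensorHom]

theorem tensorLaw_mu (μ : T ⋙ T ⟶ T)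
    (hℓnat : ∀ {A B A' B' : C} (f : A ⟶ A') (g : B ⟶ B'),
      T.map (f ⊗ₘ g) ≫ ℓ A' B' = ℓ A B ≫ (T.map f ⊗ₘ T.map g))
    (hℓμ : ∀ A B : C,
      μ.app (A ⊗ B) ≫ ℓ A B = T.map (ℓ A B) ≫ ℓ (T.obj A) (T.obj B) ≫ (μ.app A ⊗ₘ μ.app B))
    (hψ₁μ : ∀ X : C, μ.app (G₁.obj X) ≫ ψ₁ X = T.map (ψ₁ X) ≫ ψ₁ (T.obj X) ≫ G₁.map (μ.app X))
    (hψ₂μ : ∀ X : C, μ.app (G₂.obj X) ≫ ψ₂ X = T.map (ψ₂ X) ≫ ψ₂ (T.obj X) ≫ G₂.map (μ.app X))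
    (X : C) :
    μ.app (G₁.obj X ⊗ G₂.obj X) ≫ tensorLaw ℓ ψ₁ ψ₂ X
      = T.map (tensorLaw ℓ ψ₁ ψ₂ X) ≫ tensorLaw ℓ ψ₁ ψ₂ (T.obj X)
          ≫ (G₁.map (μ.app X) ⊗ₘ G₂.map (μ.app X)) := by
  rw [reassoc_of% map_tensorLaw_comp_tensorLaw hℓnat, tensorLaw, reassoc_of% hℓμ]
  simp only [Category.assoc, tensorHom_comp_tensorHom, hψ₁μ, hψ₂μ]

theorem tensorLaw_eta (η : 𝟭 C ⟶ T)
    (hℓη : ∀ A B : C, η.app (A ⊗ B) ≫ ℓ A B = η.app A ⊗ₘ η.app B)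
    (hψ₁η : ∀ X : C, η.app (G₁.obj X) ≫ ψ₁ X = G₁.map (η.app X))
    (hψ₂η : ∀ X : C, η.app (G₂.obj X) ≫ ψ₂ X = G₂.map (η.app X))
    (X : C) :
    η.app (G₁.obj X ⊗ G₂.obj X) ≫ tensorLaw ℓ ψ₁ ψ₂ X
      = G₁.map (η.app X) ⊗ₘ G₂.map (η.app X) := by
  rw [tensorLaw, reassoc_of% hℓη, tensorHom_comp_tensorHom, hψ₁η, hψ₂η]

theorem tensorLaw_symm (ς : T ⋙ T ⟶ T ⋙ T)
    (hℓnat : ∀ {A B A' B' : C} (f : A ⟶ A') (g : B ⟶ B'),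
      T.map (f ⊗ₘ g) ≫ ℓ A' B' = ℓ A B ≫ (T.map f ⊗ₘ T.map g))
    (hℓς : ∀ A B : C,
      ς.app (A ⊗ B) ≫ T.map (ℓ A B) ≫ ℓ (T.obj A) (T.obj B)
        = T.map (ℓ A B) ≫ ℓ (T.obj A) (T.obj B) ≫ (ς.app A ⊗ₘ ς.app B))
    (hψ₁ς : ∀ X : C, T.map (ψ₁ X) ≫ ψ₁ (T.obj X) ≫ G₁.map (ς.app X)
        = ς.app (G₁.obj X) ≫ T.map (ψ₁ X) ≫ ψ₁ (T.obj X))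
    (hψ₂ς : ∀ X : C, T.map (ψ₂ X) ≫ ψ₂ (T.obj X) ≫ G₂.map (ς.app X)
        = ς.app (G₂.obj X) ≫ T.map (ψ₂ X) ≫ ψ₂ (T.obj X))
    (X : C) :
    T.map (tensorLaw ℓ ψ₁ ψ₂ X) ≫ tensorLaw ℓ ψ₁ ψ₂ (T.obj X)
        ≫ (G₁.map (ς.app X) ⊗ₘ G₂.map (ς.app X))
      = ς.app (G₁.obj X ⊗ G₂.obj X) ≫ T.map (tensorLaw ℓ ψ₁ ψ₂ X)
          ≫ tensorLaw ℓ ψ₁ ψ₂ (T.obj X) := by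
  rw [reassoc_of% map_tensorLaw_comp_tensorLaw hℓnat, map_tensorLaw_comp_tensorLaw hℓnat,
    reassoc_of% hℓς]
  simp only [Category.assoc, tensorHom_comp_tensorHom, hψ₁ς, hψ₂ς]

end TensorDistribLaw

open TensorDistribLaw in
theorem tensor_of_symmetric_distributive_laws_general
    {C : Type*} [Category C] [MonoidalCategory C] (T : C ⥤ C)
    (μ : T ⋙ T ⟶ T) (η : 𝟭 C ⟶ T) (ς : T ⋙ T ⟶ T ⋙ T)
    (ℓ : ∀ A B : C, T.obj (A ⊗ B) ⟶ T.obj A ⊗ T.obj B)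
    (hℓnat : ∀ {A B A' B' : C} (f : A ⟶ A') (g : B ⟶ B'),
      T.map (f ⊗ₘ g) ≫ ℓ A' B' = ℓ A B ≫ (T.map f ⊗ₘ T.map g))
    -- oplax monoidal structure is compatible with `μ`, `η`, `ς`
    (hℓμ : ∀ A B : C,
      μ.app (A ⊗ B) ≫ ℓ A B
        = T.map (ℓ A B) ≫ ℓ (T.obj A) (T.obj B) ≫ (μ.app A ⊗ₘ μ.app B))
    (hℓη : ∀ A B : C, η.app (A ⊗ B) ≫ ℓ A B = η.app A ⊗ₘ η.app B)
    (hℓς : ∀ A B : C,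
      ς.app (A ⊗ B) ≫ T.map (ℓ A B) ≫ ℓ (T.obj A) (T.obj B)
        = T.map (ℓ A B) ≫ ℓ (T.obj A) (T.obj B) ≫ (ς.app A ⊗ₘ ς.app B))
    (G₁ G₂ : C ⥤ C)
    (ψ₁ : ∀ X : C, T.obj (G₁.obj X) ⟶ G₁.obj (T.obj X))
    (ψ₂ : ∀ X : C, T.obj (G₂.obj X) ⟶ G₂.obj (T.obj X))
    (hψ₁nat : ∀ {X Y : C} (f : X ⟶ Y),
      T.map (G₁.map f) ≫ ψ₁ Y = ψ₁ X ≫ G₁.map (T.map f))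
    (hψ₂nat : ∀ {X Y : C} (f : X ⟶ Y),
      T.map (G₂.map f) ≫ ψ₂ Y = ψ₂ X ≫ G₂.map (T.map f))
    -- ψ₁, ψ₂ are symmetric distributive laws
    (hψ₁μ : ∀ X : C, μ.app (G₁.obj X) ≫ ψ₁ X
        = T.map (ψ₁ X) ≫ ψ₁ (T.obj X) ≫ G₁.map (μ.app X))
    (hψ₁η : ∀ X : C, η.app (G₁.obj X) ≫ ψ₁ X = G₁.map (η.app X))
    (hψ₁ς : ∀ X : C,
      T.map (ψ₁ X) ≫ ψ₁ (T.obj X) ≫ G₁.map (ς.app X)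
        = ς.app (G₁.obj X) ≫ T.map (ψ₁ X) ≫ ψ₁ (T.obj X))
    (hψ₂μ : ∀ X : C, μ.app (G₂.obj X) ≫ ψ₂ X
        = T.map (ψ₂ X) ≫ ψ₂ (T.obj X) ≫ G₂.map (μ.app X))
    (hψ₂η : ∀ X : C, η.app (G₂.obj X) ≫ ψ₂ X = G₂.map (η.app X))
    (hψ₂ς : ∀ X : C,
      T.map (ψ₂ X) ≫ ψ₂ (T.obj X) ≫ G₂.map (ς.app X)
        = ς.app (G₂.obj X) ≫ T.map (ψ₂ X) ≫ ψ₂ (T.obj X)) :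
    -- the tensored law `ψ X = ℓ ≫ (ψ₁ X ⊗ₘ ψ₂ X)` is a symmetric distributive law
    -- between `T` and `G₁ ⊗ G₂`:
    (∀ {X Y : C} (f : X ⟶ Y),
      T.map (G₁.map f ⊗ₘ G₂.map f) ≫ (ℓ (G₁.obj Y) (G₂.obj Y) ≫ (ψ₁ Y ⊗ₘ ψ₂ Y))
        = (ℓ (G₁.obj X) (G₂.obj X) ≫ (ψ₁ X ⊗ₘ ψ₂ X))
            ≫ (G₁.map (T.map f) ⊗ₘ G₂.map (T.map f))) ∧
    (∀ X : C,
      μ.app (G₁.obj X ⊗ G₂.obj X) ≫ ℓ (G₁.obj X) (G₂.obj X) ≫ (ψ₁ X ⊗ₘ ψ₂ X)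
        = T.map (ℓ (G₁.obj X) (G₂.obj X) ≫ (ψ₁ X ⊗ₘ ψ₂ X))
            ≫ (ℓ (G₁.obj (T.obj X)) (G₂.obj (T.obj X)) ≫ (ψ₁ (T.obj X) ⊗ₘ ψ₂ (T.obj X)))
            ≫ (G₁.map (μ.app X) ⊗ₘ G₂.map (μ.app X))) ∧
    (∀ X : C,
      η.app (G₁.obj X ⊗ G₂.obj X) ≫ ℓ (G₁.obj X) (G₂.obj X) ≫ (ψ₁ X ⊗ₘ ψ₂ X)
        = G₁.map (η.app X) ⊗ₘ G₂.map (η.app X)) ∧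
    (∀ X : C,
      T.map (ℓ (G₁.obj X) (G₂.obj X) ≫ (ψ₁ X ⊗ₘ ψ₂ X))
          ≫ (ℓ (G₁.obj (T.obj X)) (G₂.obj (T.obj X)) ≫ (ψ₁ (T.obj X) ⊗ₘ ψ₂ (T.obj X)))
          ≫ (G₁.map (ς.app X) ⊗ₘ G₂.map (ς.app X))
        = ς.app (G₁.obj X ⊗ G₂.obj X)
            ≫ T.map (ℓ (G₁.obj X) (G₂.obj X) ≫ (ψ₁ X ⊗ₘ ψ₂ X))
            ≫ (ℓ (G₁.obj (T.obj X)) (G₂.obj (T.obj X)) ≫ (ψ₁ (T.obj X) ⊗ₘ ψ₂ (T.obj X)))) :=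
  ⟨tensorLaw_naturality hℓnat hψ₁nat hψ₂nat, tensorLaw_mu μ hℓnat hℓμ hψ₁μ hψ₂μ,
    tensorLaw_eta η hℓη hψ₁η hψ₂η, tensorLaw_symm ς hℓnat hℓς hψ₁ς hψ₂ς⟩

/-- Tensoring of symmetric distributive laws: for an oplax monoidal symmetric
monad `(T, ℓ, e, μ, η, ς)` on a monoidal category and symmetric distributive
laws `ψ₁ : T G₁ ⟶ G₁ T`, `ψ₂ : T G₂ ⟶ G₂ T`, the composite
`ψ = (ψ₁ ⊗ₘ ψ₂) ∘ ℓ` is a symmetric distributive law between `T` and the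
pointwise tensor `G₁ ⊗ G₂`. -/
theorem tensor_of_symmetric_distributive_laws
    {C : Type*} [Category C] [MonoidalCategory C] (T : C ⥤ C)
    (μ : T ⋙ T ⟶ T) (η : 𝟭 C ⟶ T) (ς : T ⋙ T ⟶ T ⋙ T)
    (ℓ : ∀ A B : C, T.obj (A ⊗ B) ⟶ T.obj A ⊗ T.obj B)
    (e : T.obj (𝟙_ C) ⟶ 𝟙_ C)
    (hℓnat : ∀ {A B A' B' : C} (f : A ⟶ A') (g : B ⟶ B'),
      T.map (f ⊗ₘ g) ≫ ℓ A' B' = ℓ A B ≫ (T.map f ⊗ₘ T.map g))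
    -- oplax monoidal structure is compatible with `μ`, `η`, `ς`
    (hℓμ : ∀ A B : C,
      μ.app (A ⊗ B) ≫ ℓ A B
        = T.map (ℓ A B) ≫ ℓ (T.obj A) (T.obj B) ≫ (μ.app A ⊗ₘ μ.app B))
    (hℓη : ∀ A B : C, η.app (A ⊗ B) ≫ ℓ A B = η.app A ⊗ₘ η.app B)
    (hℓς : ∀ A B : C,
      ς.app (A ⊗ B) ≫ T.map (ℓ A B) ≫ ℓ (T.obj A) (T.obj B)
        = T.map (ℓ A B) ≫ ℓ (T.obj A) (T.obj B) ≫ (ς.app A ⊗ₘ ς.app B))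
    (G₁ G₂ : C ⥤ C)
    (ψ₁ : ∀ X : C, T.obj (G₁.obj X) ⟶ G₁.obj (T.obj X))
    (ψ₂ : ∀ X : C, T.obj (G₂.obj X) ⟶ G₂.obj (T.obj X))
    (hψ₁nat : ∀ {X Y : C} (f : X ⟶ Y),
      T.map (G₁.map f) ≫ ψ₁ Y = ψ₁ X ≫ G₁.map (T.map f))
    (hψ₂nat : ∀ {X Y : C} (f : X ⟶ Y),
      T.map (G₂.map f) ≫ ψ₂ Y = ψ₂ X ≫ G₂.map (T.map f))
    -- ψ₁, ψ₂ are symmetric distributive laws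
    (hψ₁μ : ∀ X : C, μ.app (G₁.obj X) ≫ ψ₁ X
        = T.map (ψ₁ X) ≫ ψ₁ (T.obj X) ≫ G₁.map (μ.app X))
    (hψ₁η : ∀ X : C, η.app (G₁.obj X) ≫ ψ₁ X = G₁.map (η.app X))
    (hψ₁ς : ∀ X : C,
      T.map (ψ₁ X) ≫ ψ₁ (T.obj X) ≫ G₁.map (ς.app X)
        = ς.app (G₁.obj X) ≫ T.map (ψ₁ X) ≫ ψ₁ (T.obj X))
    (hψ₂μ : ∀ X : C, μ.app (G₂.obj X) ≫ ψ₂ X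
        = T.map (ψ₂ X) ≫ ψ₂ (T.obj X) ≫ G₂.map (μ.app X))
    (hψ₂η : ∀ X : C, η.app (G₂.obj X) ≫ ψ₂ X = G₂.map (η.app X))
    (hψ₂ς : ∀ X : C,
      T.map (ψ₂ X) ≫ ψ₂ (T.obj X) ≫ G₂.map (ς.app X)
        = ς.app (G₂.obj X) ≫ T.map (ψ₂ X) ≫ ψ₂ (T.obj X)) :
    -- the tensored law `ψ X = ℓ ≫ (ψ₁ X ⊗ₘ ψ₂ X)` is a symmetric distributive law
    -- between `T` and `G₁ ⊗ G₂`: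
    (∀ {X Y : C} (f : X ⟶ Y),
      T.map (G₁.map f ⊗ₘ G₂.map f) ≫ (ℓ (G₁.obj Y) (G₂.obj Y) ≫ (ψ₁ Y ⊗ₘ ψ₂ Y))
        = (ℓ (G₁.obj X) (G₂.obj X) ≫ (ψ₁ X ⊗ₘ ψ₂ X))
            ≫ (G₁.map (T.map f) ⊗ₘ G₂.map (T.map f))) ∧
    (∀ X : C,
      μ.app (G₁.obj X ⊗ G₂.obj X) ≫ ℓ (G₁.obj X) (G₂.obj X) ≫ (ψ₁ X ⊗ₘ ψ₂ X)
        = T.map (ℓ (G₁.obj X) (G₂.obj X) ≫ (ψ₁ X ⊗ₘ ψ₂ X))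
            ≫ (ℓ (G₁.obj (T.obj X)) (G₂.obj (T.obj X)) ≫ (ψ₁ (T.obj X) ⊗ₘ ψ₂ (T.obj X)))
            ≫ (G₁.map (μ.app X) ⊗ₘ G₂.map (μ.app X))) ∧
    (∀ X : C,
      η.app (G₁.obj X ⊗ G₂.obj X) ≫ ℓ (G₁.obj X) (G₂.obj X) ≫ (ψ₁ X ⊗ₘ ψ₂ X)
        = G₁.map (η.app X) ⊗ₘ G₂.map (η.app X)) ∧
    (∀ X : C,
      T.map (ℓ (G₁.obj X) (G₂.obj X) ≫ (ψ₁ X ⊗ₘ ψ₂ X))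
          ≫ (ℓ (G₁.obj (T.obj X)) (G₂.obj (T.obj X)) ≫ (ψ₁ (T.obj X) ⊗ₘ ψ₂ (T.obj X)))
          ≫ (G₁.map (ς.app X) ⊗ₘ G₂.map (ς.app X))
        = ς.app (G₁.obj X ⊗ G₂.obj X)
            ≫ T.map (ℓ (G₁.obj X) (G₂.obj X) ≫ (ψ₁ X ⊗ₘ ψ₂ X))
            ≫ (ℓ (G₁.obj (T.obj X)) (G₂.obj (T.obj X)) ≫ (ψ₁ (T.obj X) ⊗ₘ ψ₂ (T.obj X)))) :=
  tensor_of_symmetric_distributive_laws_general T μ η ς ℓ hℓnat hℓμ hℓη hℓς G₁ G₂ ψ₁ ψ₂ hψ₁nat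
    hψ₂nat hψ₁μ hψ₁η hψ₁ς hψ₂μ hψ₂η hψ₂ς
end

section
/- Let $(T,\mu,\eta,\varsigma,\ell,e)$ be a cartesian-monoidal symmetric monad on a cartesian category (so $\ell: T(A\times B)\xrightarrow{\cong}T(A)\times T(B)$ and $e: T(1)\cong 1$). Then the composite $\underline\varsigma_X: T(T(X)\times X)\xrightarrow{\ell}TT(X)\times T(X)\xrightarrow{\varsigma_X\times\mathrm{id}}TT(X)\times T(X)$ is a symmetric distributive law (indeed an isomorphism) between the symmetric monad $T$ and the endofunctor $T^\bullet$, where $T^\bullet(X) = T(X)\times X$. -/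
open CategoryTheory MonoidalCategory CartesianMonoidalCategory

variable {C : Type*} [Category C] [CartesianMonoidalCategory C]

/-- The canonical product-comparison map `ℓ : T(X ⊗ Y) ⟶ T(X) ⊗ T(Y)`. -/
noncomputable def ell (T : C ⥤ C) (X Y : C) : T.obj (X ⊗ Y) ⟶ T.obj X ⊗ T.obj Y :=
  lift (T.map (fst X Y)) (T.map (snd X Y))

/-- The induced map `ς̲_X = (ς_X ⊗ id) ∘ ℓ : T(T(X) ⊗ X) ⟶ T(T(X)) ⊗ T(X)`,
from `T T•` to `T• T` where `T•(X) = T(X) ⊗ X`. -/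
noncomputable def sigBar (T : C ⥤ C) (ς : T ⋙ T ⟶ T ⋙ T) (X : C) :
    T.obj (T.obj X ⊗ X) ⟶ T.obj (T.obj X) ⊗ T.obj X :=
  ell T (T.obj X) X ≫ (ς.app X ▷ T.obj X)

/-!
Since `T` preserves binary products, a morphism into `T(T X) ⊗ T X` is determined by its two
components, and those of `ς̲_X` are `T(π₁) ≫ ς_X` and `T(π₂)`. Each distributive-law axiom
therefore splits into an instance of naturality of `μ`, `η` or `ς` (second component) and one
of the symmetric-monad laws for `ς` (first component): the unit law, the Yang–Baxter equation,
and the `ς`–`μ` law, the last after conjugating it by the involutions `ς_{TX}` and `T ς_X`.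
Invertibility holds because `ℓ` is invertible and `ς` is an involution.
-/

theorem comp_comp_eq_comp_of_involutive {D : Type*} [Category D] {P Q : D}
    {a b : P ⟶ P} {c : Q ⟶ Q} {m n : P ⟶ Q}
    (ha : a ≫ a = 𝟙 P) (hb : b ≫ b = 𝟙 P) (hc : c ≫ c = 𝟙 Q) (h : a ≫ b ≫ m = n ≫ c) :
    b ≫ a ≫ n = m ≫ c :=
  calc b ≫ a ≫ n = b ≫ a ≫ (n ≫ c) ≫ c := by simp [hc]
    _ = b ≫ a ≫ (a ≫ b ≫ m) ≫ c := by rw [h]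
    _ = m ≫ c := by simp [reassoc_of% ha, reassoc_of% hb]

namespace sigBar

variable {T : C ⥤ C} {ς : T ⋙ T ⟶ T ⋙ T}

@[simp]
theorem fst_eq (X : C) :
    sigBar T ς X ≫ fst _ _ = T.map (fst (T.obj X) X) ≫ ς.app X := by
  simp [sigBar, ell]

@[simp]
theorem snd_eq (X : C) : sigBar T ς X ≫ snd _ _ = T.map (snd (T.obj X) X) := by
  simp [sigBar, ell]

theorem isIso {X : C} (hℓ : IsIso (ell T (T.obj X) X)) (hinv : ς.app X ≫ ς.app X = 𝟙 _) :
    IsIso (sigBar T ς X) :=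
  have : IsIso (ς.app X) := ⟨ς.app X, hinv, hinv⟩
  inferInstanceAs (IsIso (ell T (T.obj X) X ≫ (ς.app X ▷ T.obj X)))

theorem naturality {X Y : C} (f : X ⟶ Y) :
    T.map (T.map f ⊗ₘ f) ≫ sigBar T ς Y = sigBar T ς X ≫ (T.map (T.map f) ⊗ₘ T.map f) := by
  apply hom_ext
  · simp only [Category.assoc, tensorHom_fst, fst_eq, reassoc_of% fst_eq]
    rw [← T.map_comp_assoc, tensorHom_fst, T.map_comp_assoc]
    exact congrArg _ (ς.naturality f)
  · simp only [Category.assoc, tensorHom_snd, snd_eq, reassoc_of% snd_eq, ← T.map_comp]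

theorem map_sigBar_comp_sigBar_fst (X : C) :
    T.map (sigBar T ς X) ≫ sigBar T ς (T.obj X) ≫ fst _ _ =
      T.map (T.map (fst (T.obj X) X)) ≫ T.map (ς.app X) ≫ ς.app (T.obj X) := by
  rw [fst_eq, ← T.map_comp_assoc, fst_eq, T.map_comp_assoc]

theorem map_sigBar_comp_sigBar_snd (X : C) :
    T.map (sigBar T ς X) ≫ sigBar T ς (T.obj X) ≫ snd _ _ = T.map (T.map (snd (T.obj X) X)) := by
  rw [snd_eq, ← T.map_comp, snd_eq]

theorem unit_app_comp {η : 𝟭 C ⟶ T} {X : C}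
    (hunit : η.app (T.obj X) ≫ ς.app X = T.map (η.app X)) :
    η.app (T.obj X ⊗ X) ≫ sigBar T ς X = T.map (η.app X) ⊗ₘ η.app X := by
  apply hom_ext
  · rw [Category.assoc, fst_eq, tensorHom_fst, ← hunit, ← η.naturality_assoc]
    rfl
  · rw [Category.assoc, snd_eq, tensorHom_snd, ← η.naturality]
    rfl

theorem mu_app_comp {μ : T ⋙ T ⟶ T} {X : C}
    (hmu : T.map (ς.app X) ≫ ς.app (T.obj X) ≫ T.map (μ.app X) = μ.app (T.obj X) ≫ ς.app X) :
    μ.app (T.obj X ⊗ X) ≫ sigBar T ς X =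
      T.map (sigBar T ς X) ≫ sigBar T ς (T.obj X) ≫ (T.map (μ.app X) ⊗ₘ μ.app X) := by
  apply hom_ext
  · simp only [Category.assoc, fst_eq, tensorHom_fst, reassoc_of% map_sigBar_comp_sigBar_fst, hmu]
    exact (μ.naturality_assoc _ _).symm
  · simp only [Category.assoc, snd_eq, tensorHom_snd, reassoc_of% map_sigBar_comp_sigBar_snd]
    exact (μ.naturality _).symm

theorem sigma_app_comp {X : C}
    (hYB : T.map (ς.app X) ≫ ς.app (T.obj X) ≫ T.map (ς.app X)
      = ς.app (T.obj X) ≫ T.map (ς.app X) ≫ ς.app (T.obj X)) :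
    T.map (sigBar T ς X) ≫ sigBar T ς (T.obj X) ≫ (T.map (ς.app X) ⊗ₘ ς.app X) =
      ς.app (T.obj X ⊗ X) ≫ T.map (sigBar T ς X) ≫ sigBar T ς (T.obj X) := by
  apply hom_ext
  · simp only [Functor.comp_obj, Category.assoc, tensorHom_fst,
      reassoc_of% map_sigBar_comp_sigBar_fst, map_sigBar_comp_sigBar_fst, hYB]
    exact ς.naturality_assoc _ _
  · simp only [Functor.comp_obj, Category.assoc, tensorHom_snd,
      reassoc_of% map_sigBar_comp_sigBar_snd, map_sigBar_comp_sigBar_snd]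
    exact ς.naturality _

end sigBar

theorem sigBar_is_symmetric_distributive_law_general
    (T : C ⥤ C) (μ : T ⋙ T ⟶ T) (η : 𝟭 C ⟶ T) (ς : T ⋙ T ⟶ T ⋙ T)
    -- `T` is cartesian monoidal: the comparison maps are isomorphisms
    (hℓiso : ∀ X Y : C, IsIso (ell T X Y))
    -- symmetric monad laws
    (hinv : ∀ X : C, ς.app X ≫ ς.app X = 𝟙 (T.obj (T.obj X)))
    (hYB : ∀ X : C,
      T.map (ς.app X) ≫ ς.app (T.obj X) ≫ T.map (ς.app X)
        = ς.app (T.obj X) ≫ T.map (ς.app X) ≫ ς.app (T.obj X))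
    (hunit : ∀ X : C, η.app (T.obj X) ≫ ς.app X = T.map (η.app X))
    (hlast : ∀ X : C,
      ς.app (T.obj X) ≫ T.map (ς.app X) ≫ μ.app (T.obj X)
        = T.map (μ.app X) ≫ ς.app X) :
    -- `ς̲` is an isomorphism
    (∀ X : C, IsIso (sigBar T ς X)) ∧
    -- naturality of `ς̲`
    (∀ {X Y : C} (f : X ⟶ Y),
      T.map (T.map f ⊗ₘ f) ≫ sigBar T ς Y
        = sigBar T ς X ≫ (T.map (T.map f) ⊗ₘ T.map f)) ∧
    -- compatibility with `μ`
    (∀ X : C,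
      μ.app (T.obj X ⊗ X) ≫ sigBar T ς X
        = T.map (sigBar T ς X) ≫ sigBar T ς (T.obj X)
            ≫ (T.map (μ.app X) ⊗ₘ μ.app X)) ∧
    -- compatibility with `η`
    (∀ X : C,
      η.app (T.obj X ⊗ X) ≫ sigBar T ς X = T.map (η.app X) ⊗ₘ η.app X) ∧
    -- compatibility with `ς`
    (∀ X : C,
      T.map (sigBar T ς X) ≫ sigBar T ς (T.obj X) ≫ (T.map (ς.app X) ⊗ₘ ς.app X)
        = ς.app (T.obj X ⊗ X) ≫ T.map (sigBar T ς X) ≫ sigBar T ς (T.obj X)) := by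
  have hmu (X : C) :
      T.map (ς.app X) ≫ ς.app (T.obj X) ≫ T.map (μ.app X) = μ.app (T.obj X) ≫ ς.app X :=
    comp_comp_eq_comp_of_involutive (hinv (T.obj X))
      (by rw [← T.map_comp, hinv]; exact T.map_id _) (hinv X) (hlast X)
  exact ⟨fun X => sigBar.isIso (hℓiso _ _) (hinv X), sigBar.naturality,
    fun X => sigBar.mu_app_comp (hmu X), fun X => sigBar.unit_app_comp (hunit X),
    fun X => sigBar.sigma_app_comp (hYB X)⟩

/-- For a cartesian-monoidal symmetric monad `(T, μ, η, ς, ℓ, e)` on a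
cartesian category, the composite `ς̲ = (ς ⊗ id) ∘ ℓ` is a symmetric
distributive law — indeed an isomorphism — between the symmetric monad `T` and
the endofunctor `T•(X) = T(X) ⊗ X`. -/
theorem sigBar_is_symmetric_distributive_law
    (T : C ⥤ C) (μ : T ⋙ T ⟶ T) (η : 𝟭 C ⟶ T) (ς : T ⋙ T ⟶ T ⋙ T)
    -- `T` is cartesian monoidal: the comparison maps are isomorphisms
    (hℓiso : ∀ X Y : C, IsIso (ell T X Y)) (heiso : IsIso (toUnit (T.obj (𝟙_ C))))
    -- monad laws
    (hmassoc : ∀ X : C, T.map (μ.app X) ≫ μ.app X = μ.app (T.obj X) ≫ μ.app X)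
    (hmunitl : ∀ X : C, η.app (T.obj X) ≫ μ.app X = 𝟙 (T.obj X))
    (hmunitr : ∀ X : C, T.map (η.app X) ≫ μ.app X = 𝟙 (T.obj X))
    -- symmetric monad laws
    (hcomm : ∀ X : C, ς.app X ≫ μ.app X = μ.app X)
    (hinv : ∀ X : C, ς.app X ≫ ς.app X = 𝟙 (T.obj (T.obj X)))
    (hYB : ∀ X : C,
      T.map (ς.app X) ≫ ς.app (T.obj X) ≫ T.map (ς.app X)
        = ς.app (T.obj X) ≫ T.map (ς.app X) ≫ ς.app (T.obj X))
    (hunit : ∀ X : C, η.app (T.obj X) ≫ ς.app X = T.map (η.app X))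
    (hlast : ∀ X : C,
      ς.app (T.obj X) ≫ T.map (ς.app X) ≫ μ.app (T.obj X)
        = T.map (μ.app X) ≫ ς.app X) :
    -- `ς̲` is an isomorphism
    (∀ X : C, IsIso (sigBar T ς X)) ∧
    -- naturality of `ς̲`
    (∀ {X Y : C} (f : X ⟶ Y),
      T.map (T.map f ⊗ₘ f) ≫ sigBar T ς Y
        = sigBar T ς X ≫ (T.map (T.map f) ⊗ₘ T.map f)) ∧
    -- compatibility with `μ`
    (∀ X : C,
      μ.app (T.obj X ⊗ X) ≫ sigBar T ς X
        = T.map (sigBar T ς X) ≫ sigBar T ς (T.obj X)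
            ≫ (T.map (μ.app X) ⊗ₘ μ.app X)) ∧
    -- compatibility with `η`
    (∀ X : C,
      η.app (T.obj X ⊗ X) ≫ sigBar T ς X = T.map (η.app X) ⊗ₘ η.app X) ∧
    -- compatibility with `ς`
    (∀ X : C,
      T.map (sigBar T ς X) ≫ sigBar T ς (T.obj X) ≫ (T.map (ς.app X) ⊗ₘ ς.app X)
        = ς.app (T.obj X ⊗ X) ≫ T.map (sigBar T ς X) ≫ sigBar T ς (T.obj X)) :=
  sigBar_is_symmetric_distributive_law_general T μ η ς hℓiso hinv hYB hunit hlast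
end

section
/- Let $(C,\mu,\iota)$ be an abstract clone, with single-variable substitution $s_m(t,u) = \mu_{m+1,m}(t,\iota^m_0,\dots,\iota^m_{m-1},u)$. Then the associativity law of substitution algebras holds: for $x\in C(m+2)$, $y\in C(m+1)$, $z\in C(m)$, $s_m(s_{m+1}(x,y),z) = s_m(s_{m+1}(C(\mathrm{id}_m+\mathrm{s})(x), C(\mathrm{id}_m+\mathrm{w})(z)), s_m(y,z))$, where $\mathrm{s}:\mathrm{Fin}\,2\to\mathrm{Fin}\,2$ is the transposition, $\mathrm{w}:\mathrm{Fin}\,0\to\mathrm{Fin}\,1$, so $\mathrm{id}_m+\mathrm{s}$ swaps the top two indices of $\mathrm{Fin}(m+2)$ and $\mathrm{id}_m+\mathrm{w}$ is the inclusion $\mathrm{Fin}\,m\hookrightarrow\mathrm{Fin}(m+1)$. -/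
/-- Extension `f + id₁ : Fin (m+1) → Fin (n+1)` of `f : Fin m → Fin n`,
sending the last element to the last element. -/
def ext {m n : ℕ} (f : Fin m → Fin n) : Fin (m+1) → Fin (n+1) :=
  Fin.lastCases (Fin.last n) (fun j => (f j).castSucc)

/-- The map `id_m + c : Fin (m+2) → Fin (m+1)` identifying the top two indices. -/
def contr (m : ℕ) : Fin (m+2) → Fin (m+1) :=
  Fin.lastCases (Fin.last m) (fun j => j)

/-- The map `id_m + s : Fin (m+2) → Fin (m+2)` swapping the top two indices. -/
def swap2 (m : ℕ) : Fin (m+2) → Fin (m+2) := fun i =>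
  if _ : i.val = m then ⟨m+1, by omega⟩ else if _ : i.val = m+1 then ⟨m, by omega⟩ else i

/-- An abstract clone. -/
structure AbstractClone where
  C : ℕ → Type
  comp : ∀ m n : ℕ, C m → (Fin m → C n) → C n
  proj : ∀ m : ℕ, Fin m → C m
  assoc : ∀ (l m n : ℕ) (x : C l) (y : Fin l → C m) (z : Fin m → C n),
    comp m n (comp l m x y) z = comp l n x (fun i => comp m n (y i) z)
  left_unit : ∀ (m n : ℕ) (i : Fin m) (x : Fin m → C n),
    comp m n (proj m i) x = x i
  right_unit : ∀ (m : ℕ) (x : C m), comp m m x (proj m) = x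

/-- The presheaf action `C(f)(t) = μ(t, ι_{f 0}, …, ι_{f (m-1)})` associated to a clone. -/
def AbstractClone.act (K : AbstractClone) (m n : ℕ) (f : Fin m → Fin n) (t : K.C m) : K.C n :=
  K.comp m n t (fun i => K.proj n (f i))

/-- Single-variable substitution `s_m(t,u) = μ(t, ι_0, …, ι_{m-1}, u)` derived from a clone. -/
def AbstractClone.sub (K : AbstractClone) (m : ℕ) (t : K.C (m+1)) (u : K.C m) : K.C m :=
  K.comp (m+1) m t (Fin.snoc (K.proj m) u)

/-- The derived single-variable substitution on a clone satisfies the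
associativity law of substitution algebras. -/
theorem clone_sub_assoc (K : AbstractClone) (m : ℕ)
    (x : K.C (m+2)) (y : K.C (m+1)) (z : K.C m) :
    K.sub m (K.sub (m+1) x y) z
      = K.sub m
          (K.sub (m+1) (K.act (m+2) (m+2) (swap2 m) x) (K.act m (m+1) Fin.castSucc z))
          (K.sub m y z) := by

  unfold AbstractClone.sub AbstractClone.act
  rw [K.assoc, K.assoc, K.assoc]
  congr 1
  funext i
  rw [K.left_unit]
  refine Fin.lastCases ?_ (fun j => ?_) i
  · -- i = last (m+1)
    have hs : swap2 m (Fin.last (m+1)) = Fin.castSucc (Fin.last m) := by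
      simp [swap2, Fin.last]
    rw [hs]
    simp only [Fin.snoc_last, Fin.snoc_castSucc]
    rw [K.left_unit]
    simp only [Fin.snoc_last]
  · refine Fin.lastCases ?_ (fun j' => ?_) j
    · -- i = castSucc (last m), val = m
      have hs : swap2 m (Fin.castSucc (Fin.last m)) = Fin.last (m+1) := by
        simp [swap2, Fin.last]
      rw [hs]
      simp only [Fin.snoc_last, Fin.snoc_castSucc]
      rw [K.left_unit, K.assoc]
      simp only [Fin.snoc_last, Fin.snoc_castSucc]
      simp only [K.left_unit, Fin.snoc_castSucc]
      exact (K.right_unit m z).symm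
    · -- i = castSucc (castSucc j'), val < m
      have hs : swap2 m (Fin.castSucc (Fin.castSucc j')) = Fin.castSucc (Fin.castSucc j') := by
        have h := j'.isLt
        unfold swap2
        rw [dif_neg (by simp; omega), dif_neg (by simp; omega)]
      rw [hs]
      simp only [Fin.snoc_castSucc]
      rw [K.left_unit, K.left_unit]
      simp only [Fin.snoc_castSucc]
end

section
/- Let $(A,s,v)$ be a substitution algebra in $\mathrm{Set}^\mathbb{F}$ (presented equationally: a presheaf $A$ on $\mathbb{F}$ with natural $s_m: A(m+1)\times A(m)\to A(m)$ and elements $\nu_m\in A(m+1)$ natural in $m$, satisfying $s_m(\nu_m,x)=x$, $s_{m+1}(x,\nu_m)=A(\mathrm{id}_m+\mathrm{c})(x)$, $s_m(A(\mathrm{id}_m+\mathrm{w})(x),y)=x$, and the associativity law). Define $\varphi_{m,n}: A(n+m)\times(A\,n)^m\to A(n)$ by $\varphi_{0,n}(t)=t$ and $\varphi_{m+1,n}(t,\vec u, u_m) = \varphi_{m,n}(s_{n+m}(t, A(\mathrm{incl})(u_m)),\vec u)$ where $\mathrm{incl}:\mathrm{Fin}\,n\hookrightarrow\mathrm{Fin}(n+m)$,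 and $\mu_{m,n}(t,\vec u) = \varphi_{m,n}(A(i\mapsto n+i)(t),\vec u)$, $\iota^m_i = A(0\mapsto i)(\nu_0)$. Then $\mu_{m,n}(\iota^m_i,u_0,\dots,u_{m-1}) = u_i$ for all $i<m$ (the left unit clone axiom holds). -/
/-- A substitution algebra in the presheaf topos `Set^𝔽`, presented equationally. -/
structure SubstitutionAlgebra where
  A : ℕ → Type
  act : ∀ m n : ℕ, (Fin m → Fin n) → A m → A n
  act_id : ∀ (m : ℕ) (x : A m), act m m id x = x
  act_comp : ∀ (l m n : ℕ) (g : Fin l → Fin m) (f : Fin m → Fin n) (x : A l),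
    act l n (f ∘ g) x = act m n f (act l m g x)
  s : ∀ m : ℕ, A (m+1) → A m → A m
  v : ∀ m : ℕ, A (m+1)
  s_nat : ∀ (m n : ℕ) (f : Fin m → Fin n) (x : A (m+1)) (y : A m),
    act m n f (s m x y) = s n (act (m+1) (n+1) (ext f) x) (act m n f y)
  v_nat : ∀ (m n : ℕ) (f : Fin m → Fin n), act (m+1) (n+1) (ext f) (v m) = v n
  unit_law : ∀ (m : ℕ) (x : A m), s m (v m) x = x
  contract_law : ∀ (m : ℕ) (x : A (m+2)), s (m+1) x (v m) = act (m+2) (m+1) (contr m) x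
  weaken_law : ∀ (m : ℕ) (x : A m) (y : A m), s m (act m (m+1) Fin.castSucc x) y = x
  assoc_law : ∀ (m : ℕ) (x : A (m+2)) (y : A (m+1)) (z : A m),
    s m (s (m+1) x y) z
      = s m (s (m+1) (act (m+2) (m+2) (swap2 m) x) (act m (m+1) Fin.castSucc z)) (s m y z)

/-- Iterated single-variable substitution `φ_{m,n} : A(n+m) × (A n)^m → A(n)`. -/
def phiGen (A : ℕ → Type) (act : ∀ m n : ℕ, (Fin m → Fin n) → A m → A n)
    (s : ∀ m : ℕ, A (m+1) → A m → A m) :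
    (m n : ℕ) → A (n+m) → (Fin m → A n) → A n
  | 0, _, t, _ => t
  | m+1, n, t, u =>
    phiGen A act s m n
      (s (n+m) t (act n (n+m) (Fin.castLE (Nat.le_add_right n m)) (u (Fin.last m))))
      (fun i => u i.castSucc)

/-- Simultaneous substitution `μ_{m,n} : A(m) × (A n)^m → A(n)` derived by
iterating single-variable substitution. -/
def muGen (A : ℕ → Type) (act : ∀ m n : ℕ, (Fin m → Fin n) → A m → A n)
    (s : ∀ m : ℕ, A (m+1) → A m → A m) (m n : ℕ) (t : A m) (u : Fin m → A n) : A n :=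
  phiGen A act s m n (act m (n+m) (fun i => ⟨n + i.val, by omega⟩) t) u

/-- Derived projections `ι^m_i = A(0 ↦ i)(ν₀)`. -/
def iotaGen (A : ℕ → Type) (act : ∀ m n : ℕ, (Fin m → Fin n) → A m → A n)
    (v : ∀ m : ℕ, A (m+1)) (m : ℕ) (i : Fin m) : A m :=
  act 1 m (fun _ => i) (v 0)

/-- The variable `x_j ∈ A(k)`. -/
def var (S : SubstitutionAlgebra) (k : ℕ) (j : Fin k) : S.A k :=
  S.act 1 k (fun _ => j) (S.v 0)

lemma act_var (S : SubstitutionAlgebra) (k n : ℕ) (f : Fin k → Fin n) (j : Fin k) :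
    S.act k n f (var S k j) = var S n (f j) := by
  unfold var
  rw [← S.act_comp]
  rfl

lemma var_last (S : SubstitutionAlgebra) (k : ℕ) : var S (k+1) (Fin.last k) = S.v k := by
  have h := S.v_nat 0 k Fin.elim0
  have he : ext (Fin.elim0 : Fin 0 → Fin k) = fun _ => Fin.last k := by
    funext i
    have hi : i = Fin.last 0 := by omega
    rw [hi]
    simp only [ext, Fin.lastCases_last]
  rw [he] at h
  exact h

lemma phi_castLE (S : SubstitutionAlgebra) (m n : ℕ) (x : S.A n) (u : Fin m → S.A n) :
    phiGen S.A S.act S.s m n (S.act n (n+m) (Fin.castLE (Nat.le_add_right n m)) x) u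
      = x := by
  induction m with
  | zero =>
    show S.act n n (Fin.castLE (Nat.le_add_right n 0)) x = x
    have : (Fin.castLE (Nat.le_add_right n 0) : Fin n → Fin n) = id := by
      funext j; ext; simp
    rw [this, S.act_id]
  | succ m ih =>
    show phiGen S.A S.act S.s m n
      (S.s (n+m) (S.act n (n+m+1) (Fin.castLE (Nat.le_add_right n (m+1))) x) _) _ = x
    have hc : (Fin.castLE (Nat.le_add_right n (m+1)) : Fin n → Fin (n+m+1))
        = Fin.castSucc ∘ (Fin.castLE (Nat.le_add_right n m)) := by
      funext j; ext; simp
    rw [hc, S.act_comp, S.weaken_law]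
    exact ih _

lemma phi_var (S : SubstitutionAlgebra) (m n : ℕ) (i : Fin m) (u : Fin m → S.A n) :
    phiGen S.A S.act S.s m n (var S (n+m) ⟨n + i.val, by omega⟩) u = u i := by
  induction m with
  | zero => exact i.elim0
  | succ m ih =>
    show phiGen S.A S.act S.s m n
      (S.s (n+m) (var S (n+m+1) ⟨n + i.val, by omega⟩) _) _ = u i
    by_cases h : i.val = m
    · have h1 : (⟨n + i.val, by omega⟩ : Fin (n+m+1)) = Fin.last (n+m) := by
        ext; simp [h]
      rw [h1, var_last, S.unit_law, phi_castLE]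
      congr 1
      ext; simp [h]
    · have hlt : i.val < m := lt_of_le_of_ne (Nat.lt_succ_iff.mp i.isLt) h
      have h1 : (⟨n + i.val, by omega⟩ : Fin (n+m+1))
          = Fin.castSucc (⟨n + i.val, by omega⟩ : Fin (n+m)) := by
        ext; simp
      have h2 : var S (n+m+1) (Fin.castSucc (⟨n + i.val, by omega⟩ : Fin (n+m)))
          = S.act (n+m) (n+m+1) Fin.castSucc (var S (n+m) ⟨n + i.val, by omega⟩) := by
        rw [act_var]
      rw [h1, h2, S.weaken_law]
      have := ih ⟨i.val, hlt⟩ (fun j => u j.castSucc)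
      simp only at this
      rw [this]
      exact congrArg u (Fin.ext (by simp))

/-- The left unit clone axiom for the clone derived from a substitution algebra. -/
theorem subalg_left_unit (S : SubstitutionAlgebra) (m n : ℕ) (i : Fin m)
    (u : Fin m → S.A n) :
    muGen S.A S.act S.s m n (iotaGen S.A S.act S.v m i) u = u i := by
  show phiGen S.A S.act S.s m n
    (S.act m (n+m) (fun j => ⟨n + j.val, by omega⟩) (var S m i)) u = u i
  rw [act_var]
  exact phi_var S m n i u
end

section
/- With definitions as in the construction of an abstract clone from a substitution algebra $(A,s,\nu)$ in $\mathrm{Set}^\mathbb{F}$, the right unit clone axiom holds: $\mu_{m,m}(t,\iota^m_0,\dots,\iota^m_{m-1}) = t$ for all $t\in A(m)$, where $\mu_{m,n}$ is defined by iterating single-variable substitution via $\varphi_{m,n}$ and $\iota^m_i = A(0\mapsto i)(\nu_0)$. -/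
lemma ext_comp' {l m n : ℕ} (f : Fin m → Fin n) (g : Fin l → Fin m) :
    ext f ∘ ext g = ext (f ∘ g) := by
  funext i
  induction i using Fin.lastCases with
  | last => simp [ext]
  | cast j => simp [ext]

lemma ext_id' {n : ℕ} : ext (id : Fin n → Fin n) = id := by
  funext i
  induction i using Fin.lastCases with
  | last => simp [ext]
  | cast j => simp [ext]

/-- Substituting a projection into the last variable is a renaming. -/
lemma s_iota (S : SubstitutionAlgebra) (m : ℕ) (x : S.A (m+1)) (j : Fin m) :
    S.s m x (iotaGen S.A S.act S.v m j)
      = S.act (m+1) m (fun i => if h : i.val < m then ⟨i.val, h⟩ else j) x := by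
  match m, x, j with
  | 0, x, j => exact j.elim0
  | k+1, x, j =>
    set g : Fin (k+1) → Fin (k+1) := ⇑(Equiv.swap (Fin.last k) j) with hg
    have hgg : g ∘ g = id := by
      funext i; simp [hg, Equiv.swap_apply_self]
    have hglast : g (Fin.last k) = j := by simp [hg]
    -- v k as image of v 0
    have hv : S.v k = S.act 1 (k+1) (fun _ => Fin.last k) (S.v 0) := by
      have h := S.v_nat 0 k Fin.elim0
      rw [← h]
      congr 1
      funext i
      induction i using Fin.lastCases with
      | last => simp only [ext, Fin.lastCases_last]
      | cast i' => exact i'.elim0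
    -- iota as image of v k
    have hiota : iotaGen S.A S.act S.v (k+1) j = S.act (k+1) (k+1) g (S.v k) := by
      rw [hv, ← S.act_comp]
      show S.act 1 (k+1) (fun _ => j) (S.v 0) = _
      congr 1
      funext i
      simp [Function.comp, hglast]
    -- x as image of act (ext g)
    have hx : S.act (k+2) (k+2) (ext g) (S.act (k+2) (k+2) (ext g) x) = x := by
      rw [← S.act_comp, ext_comp', hgg, ext_id', S.act_id]
    calc S.s (k+1) x (iotaGen S.A S.act S.v (k+1) j)
        = S.s (k+1) (S.act (k+2) (k+2) (ext g) (S.act (k+2) (k+2) (ext g) x))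
            (S.act (k+1) (k+1) g (S.v k)) := by rw [hx, hiota]
      _ = S.act (k+1) (k+1) g (S.s (k+1) (S.act (k+2) (k+2) (ext g) x) (S.v k)) := by
            rw [S.s_nat]
      _ = S.act (k+1) (k+1) g (S.act (k+2) (k+1) (contr k) (S.act (k+2) (k+2) (ext g) x)) := by
            rw [S.contract_law]
      _ = S.act (k+2) (k+1) ((g ∘ contr k) ∘ ext g) x := by
            rw [S.act_comp, S.act_comp]
      _ = S.act (k+2) (k+1) (fun i => if h : i.val < k+1 then ⟨i.val, h⟩ else j) x := by
            congr 1
            funext i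
            induction i using Fin.lastCases with
            | last =>
              simp [Function.comp, ext, contr, hglast]
            | cast i' =>
              have hlt : (Fin.castSucc i').val < k + 1 := i'.isLt
              simp only [Function.comp, ext, contr, Fin.lastCases_castSucc, dif_pos hlt]
              have : g (g i') = i' := congrFun hgg i'
              rw [this]
              exact Fin.ext rfl

/-- Iterated substitution of projections is a renaming. -/
lemma phi_iota (S : SubstitutionAlgebra) (m : ℕ) :
    ∀ (n : ℕ) (t : S.A (n+m)) (e : Fin m → Fin n),
    phiGen S.A S.act S.s m n t (fun i => iotaGen S.A S.act S.v n (e i))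
      = S.act (n+m) n
          (fun i => if h : i.val < n then ⟨i.val, h⟩
            else e ⟨i.val - n, by have := i.isLt; omega⟩) t := by
  induction m with
  | zero =>
    intro n t e
    show t = _
    have : (fun i : Fin (n+0) => if h : i.val < n then (⟨i.val, h⟩ : Fin n)
        else e ⟨i.val - n, by have := i.isLt; omega⟩) = id := by
      funext i
      have hlt : i.val < n := i.isLt
      simp [dif_pos hlt]
    rw [this]
    exact (S.act_id (n+0) t).symm
  | succ m ih =>
    intro n t e
    show phiGen S.A S.act S.s m n
      (S.s (n+m) t (S.act n (n+m) (Fin.castLE (Nat.le_add_right n m))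
        (iotaGen S.A S.act S.v n (e (Fin.last m)))))
      (fun i => iotaGen S.A S.act S.v n (e i.castSucc)) = _
    have h1 : S.act n (n+m) (Fin.castLE (Nat.le_add_right n m))
        (iotaGen S.A S.act S.v n (e (Fin.last m)))
        = iotaGen S.A S.act S.v (n+m) (Fin.castLE (Nat.le_add_right n m) (e (Fin.last m))) := by
      unfold iotaGen
      rw [← S.act_comp]
      rfl
    rw [h1, s_iota, ih n _ (fun i => e i.castSucc), ← S.act_comp]
    congr 1
    funext i
    set j : Fin (n+m) := Fin.castLE (Nat.le_add_right n m) (e (Fin.last m)) with hj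
    by_cases h2 : i.val < n + m
    · by_cases h3 : i.val < n
      · simp [Function.comp, dif_pos h2, dif_pos h3]
      · simp only [Function.comp, dif_pos h2, dif_neg h3]
        exact congrArg e (Fin.ext rfl)
    · have hiv : i.val = n + m := by have := i.isLt; omega
      have h4 : ¬ i.val < n := by omega
      have hjlt : (j : Fin (n+m)).val < n := by
        simp only [hj]
        exact (e (Fin.last m)).isLt
      simp only [Function.comp, dif_neg h2, dif_neg h4]
      rw [dif_pos hjlt]
      have h5 : (⟨(j : Fin (n+m)).val, hjlt⟩ : Fin n) = e (Fin.last m) := Fin.ext rfl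
      rw [h5]
      congr 1
      exact Fin.ext (by simp only [Fin.val_last]; omega)

/-- The right unit clone axiom for the clone derived from a substitution algebra. -/
theorem subalg_right_unit (S : SubstitutionAlgebra) (m : ℕ) (t : S.A m) :
    muGen S.A S.act S.s m m t (iotaGen S.A S.act S.v m) = t := by
  have h := phi_iota S m m (S.act m (m+m) (fun i => ⟨m + i.val, by omega⟩) t) (fun i => i)
  unfold muGen
  refine h.trans ?_
  rw [← S.act_comp]
  have : ((fun i : Fin (m+m) => if h : i.val < m then (⟨i.val, h⟩ : Fin m)
      else (fun i => i) ⟨i.val - m, by have := i.isLt; omega⟩) ∘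
      (fun i : Fin m => (⟨m + i.val, by omega⟩ : Fin (m+m)))) = id := by
    funext i
    have h1 : ¬ (m + i.val < m) := by omega
    simp only [Function.comp, dif_neg h1]
    exact Fin.ext (by simp)
  rw [this, S.act_id]
end

section
/- The constructions $\mathrm{S}$ (from abstract clones to substitution algebras: $s_m(t,u) = \mu_{m+1,m}(t,\iota^m_0,\dots,\iota^m_{m-1},u)$, $v_m = \iota^{m+1}_m$) and $\mathrm{C}$ (from substitution algebras to abstract clones: $\mu_{m,n}$ by iterated single-variable substitution, $\iota^m_i = A(0\mapsto i)(\nu_0)$) are mutually inverse on objects: for every abstract clone $(C,\mu,\iota)$, $\mathrm{C}(\mathrm{S}(C,\mu,\iota)) = (C,\mu,\iota)$, and for every substitution algebra $(A,s,v)$, $\mathrm{S}(\mathrm{C}(A,s,v)) = (A,s,v)$. -/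
/-! ### Auxiliary definitions and lemmas -/

/-- Extended map `Fin (n+m) → Fin n`: identity on first `n`, `g` on the top `m`. -/
def bigmap (m n : ℕ) (g : Fin m → Fin n) : Fin (n+m) → Fin n :=
  fun i => if h : i.val < n then ⟨i.val, h⟩ else g ⟨i.val - n, by omega⟩

/-- The map `Fin (k+1) → Fin k`: identity on first `k`, sending the last to `j`. -/
def cmap (k : ℕ) (j : Fin k) : Fin (k+1) → Fin k :=
  fun i => if h : i.val < k then ⟨i.val, h⟩ else j

/-- Section of `ext (cmap k j)`. -/
def emap (k : ℕ) : Fin (k+1) → Fin (k+2) :=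
  fun i => if h : i.val < k then ⟨i.val, by omega⟩ else ⟨k+1, by omega⟩

lemma finape {α : Type*} {p : ℕ} (u : Fin p → α) {a b : Fin p} (h : a.val = b.val) :
    u a = u b := congrArg u (Fin.ext h)

lemma cmap_lt (k : ℕ) (j : Fin k) {i : Fin (k+1)} (h : i.val < k) :
    cmap k j i = ⟨i.val, h⟩ := by
  simp only [cmap]; rw [dif_pos h]

lemma cmap_ge (k : ℕ) (j : Fin k) {i : Fin (k+1)} (h : ¬ i.val < k) :
    cmap k j i = j := by
  simp only [cmap]; rw [dif_neg h]

lemma cmap_val (k : ℕ) (j : Fin k) (i : Fin (k+1)) :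
    (cmap k j i).val = if i.val < k then i.val else j.val := by
  unfold cmap; by_cases h : i.val < k <;> simp [h]

lemma bigmap_lt {m n : ℕ} (g : Fin m → Fin n) {i : Fin (n+m)} (h : i.val < n) :
    bigmap m n g i = ⟨i.val, h⟩ := by
  simp only [bigmap]; rw [dif_pos h]

lemma bigmap_ge {m n : ℕ} (g : Fin m → Fin n) {i : Fin (n+m)} (h : ¬ i.val < n) :
    bigmap m n g i = g ⟨i.val - n, by omega⟩ := by
  simp only [bigmap]; rw [dif_neg h]

lemma emap_val (k : ℕ) (i : Fin (k+1)) :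
    (emap k i).val = if i.val < k then i.val else k+1 := by
  unfold emap; by_cases h : i.val < k <;> simp [h]

lemma ext_val {m n : ℕ} (f : Fin m → Fin n) (i : Fin (m+1)) :
    (ext f i).val = if h : i.val < m then (f ⟨i.val, h⟩).val else n := by
  induction i using Fin.lastCases with
  | last => simp [ext]
  | cast j => simp [ext, j.isLt]

lemma contr_val (m : ℕ) (i : Fin (m+2)) :
    (contr m i).val = if i.val = m+1 then m else i.val := by
  induction i using Fin.lastCases with
  | last => simp [contr]
  | cast j =>
    have := j.isLt
    simp only [contr, Fin.lastCases_castSucc, Fin.coe_castSucc]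
    rw [if_neg (by omega)]

/-! ### Clone side -/

lemma clone_phi (K : AbstractClone) (m : ℕ) : ∀ (n : ℕ) (t : K.C (n+m)) (u : Fin m → K.C n),
    phiGen K.C K.act K.sub m n t u
      = K.comp (n+m) n t (fun i => if h : i.val < n then K.proj n ⟨i.val, h⟩
          else u ⟨i.val - n, by omega⟩) := by
  induction m with
  | zero =>
    intro n t u
    show t = _
    have h : (fun i : Fin (n+0) => if h : i.val < n then K.proj n ⟨i.val, h⟩
        else u ⟨i.val - n, by omega⟩) = K.proj n := by
      funext i
      rw [dif_pos (show i.val < n from i.isLt)]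
      exact finape (K.proj n) rfl
    rw [h]
    exact (K.right_unit n t).symm
  | succ m ih =>
    intro n t u
    show phiGen K.C K.act K.sub m n
        (K.sub (n+m) t (K.act n (n+m) (Fin.castLE (Nat.le_add_right n m)) (u (Fin.last m))))
        (fun i => u i.castSucc) = _
    rw [ih]
    simp only [AbstractClone.sub, AbstractClone.act]
    rw [K.assoc]
    congr 1
    funext i
    induction i using Fin.lastCases with
    | last =>
      rw [Fin.snoc_last]
      rw [K.assoc]
      rw [dif_neg (show ¬ (Fin.last (n+m)).val < n by show ¬ n+m < n; omega)]
      have h1 : (fun j : Fin n => K.comp (n+m) n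
          (K.proj (n+m) (Fin.castLE (Nat.le_add_right n m) j))
          (fun i : Fin (n+m) => if h : i.val < n then K.proj n ⟨i.val, h⟩
            else u (⟨i.val - n, by omega⟩ : Fin m).castSucc)) = K.proj n := by
        funext j
        rw [K.left_unit, dif_pos (show (Fin.castLE (Nat.le_add_right n m) j).val < n from j.isLt)]
        exact finape (K.proj n) rfl
      rw [h1, K.right_unit]
      exact finape u (show m = (Fin.last (n+m)).val - n by show m = n + m - n; omega)
    | cast i =>
      rw [Fin.snoc_castSucc, K.left_unit]
      by_cases h : i.val < n
      · rw [dif_pos h, dif_pos (show (Fin.castSucc i).val < n from h)]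
        exact finape (K.proj n) rfl
      · rw [dif_neg h, dif_neg (show ¬ (Fin.castSucc i).val < n from h)]
        exact finape u rfl

/-! ### Substitution algebra side -/

lemma act_iota (S : SubstitutionAlgebra) (n p : ℕ) (g : Fin n → Fin p) (j : Fin n) :
    S.act n p g (iotaGen S.A S.act S.v n j) = iotaGen S.A S.act S.v p (g j) := by
  unfold iotaGen
  rw [← S.act_comp 1 n p (fun _ => j) g (S.v 0)]
  rfl

lemma iota_last (S : SubstitutionAlgebra) (m : ℕ) :
    iotaGen S.A S.act S.v (m+1) (Fin.last m) = S.v m := by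
  have h := S.v_nat 0 m Fin.elim0
  have he : ext (Fin.elim0 : Fin 0 → Fin m) = fun _ : Fin 1 => Fin.last m := by
    funext i
    have h0 : i = Fin.last 0 := Fin.ext (by have := i.isLt; omega)
    rw [h0]
    show ext Fin.elim0 (Fin.last 0) = Fin.last m
    unfold ext
    rw [Fin.lastCases_last]
  rw [he] at h
  exact h

lemma sub_iota (S : SubstitutionAlgebra) (k : ℕ) (t : S.A (k+1)) (j : Fin k) :
    S.s k t (iotaGen S.A S.act S.v k j) = S.act (k+1) k (cmap k j) t := by
  have h1 : (ext (cmap k j) ∘ emap k) = id := by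
    funext i
    have hik := i.isLt
    apply Fin.ext
    show (ext (cmap k j) (emap k i)).val = i.val
    rw [ext_val]
    by_cases h : i.val < k
    · have hv : (emap k i).val = i.val := by rw [emap_val, if_pos h]
      rw [dif_pos (show (emap k i).val < k+1 by omega)]
      rw [cmap_val]
      show (if (emap k i).val < k then (emap k i).val else j.val) = i.val
      rw [hv, if_pos h]
    · rw [dif_neg (show ¬ (emap k i).val < k+1 by rw [emap_val, if_neg h]; omega)]
      omega
  have hiota : iotaGen S.A S.act S.v k j = S.act (k+1) k (cmap k j) (S.v k) := by
    rw [← iota_last S k, act_iota]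
    exact finape _ (by rw [cmap_ge k j (show ¬ (Fin.last k).val < k by show ¬ k < k; omega)])
  have ht : t = S.act (k+2) (k+1) (ext (cmap k j)) (S.act (k+1) (k+2) (emap k) t) := by
    rw [← S.act_comp, h1, S.act_id]
  rw [hiota]
  conv_lhs => rw [ht]
  rw [← S.s_nat, S.contract_law, ← S.act_comp, ← S.act_comp]
  congr 1
  funext i
  have hik := i.isLt
  apply Fin.ext
  show (cmap k j (contr k (emap k i))).val = (cmap k j i).val
  by_cases h : i.val < k
  · have he : emap k i = (⟨i.val, by omega⟩ : Fin (k+2)) := by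
      apply Fin.ext; rw [emap_val, if_pos h]
    rw [he]
    have hc : contr k (⟨i.val, by omega⟩ : Fin (k+2)) = (⟨i.val, by omega⟩ : Fin (k+1)) := by
      apply Fin.ext
      rw [contr_val]
      show (if i.val = k+1 then k else i.val) = i.val
      rw [if_neg (by omega)]
    rw [hc]
  · have he : emap k i = (⟨k+1, by omega⟩ : Fin (k+2)) := by
      apply Fin.ext; rw [emap_val, if_neg h]
    rw [he]
    have hc : contr k (⟨k+1, by omega⟩ : Fin (k+2)) = Fin.last k := by
      apply Fin.ext
      rw [contr_val]
      show (if k+1 = k+1 then k else k+1) = k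
      rw [if_pos rfl]
    rw [hc]
    rw [cmap_ge k j (show ¬ (Fin.last k).val < k by show ¬ k < k; omega),
      cmap_ge k j h]

lemma phi_iota_s17 (S : SubstitutionAlgebra) (m : ℕ) :
    ∀ (n : ℕ) (t : S.A (n+m)) (g : Fin m → Fin n) (u : Fin m → S.A n),
    (∀ i, u i = iotaGen S.A S.act S.v n (g i)) →
    phiGen S.A S.act S.s m n t u = S.act (n+m) n (bigmap m n g) t := by
  induction m with
  | zero =>
    intro n t g u hu
    show t = _
    have h : bigmap 0 n g = id := by
      funext i
      rw [bigmap_lt g (show i.val < n from i.isLt)]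
      rfl
    rw [h]
    exact (S.act_id n t).symm
  | succ m ih =>
    intro n t g u hu
    show phiGen S.A S.act S.s m n
        (S.s (n+m) t (S.act n (n+m) (Fin.castLE (Nat.le_add_right n m)) (u (Fin.last m))))
        (fun i => u i.castSucc) = _
    rw [hu (Fin.last m), act_iota, sub_iota]
    rw [ih n _ (fun i => g i.castSucc) (fun i => u i.castSucc) (fun i => hu i.castSucc)]
    rw [← S.act_comp]
    congr 1
    funext i
    have hik := i.isLt
    show bigmap m n (fun i => g i.castSucc)
        (cmap (n+m) (Fin.castLE (Nat.le_add_right n m) (g (Fin.last m))) i) = bigmap (m+1) n g i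
    by_cases hi : i.val < n+m
    · rw [cmap_lt _ _ hi]
      by_cases h2 : i.val < n
      · rw [bigmap_lt _ (show ((⟨i.val, hi⟩ : Fin (n+m))).val < n from h2),
          bigmap_lt g (show i.val < n from h2)]
      · rw [bigmap_ge _ (show ¬ ((⟨i.val, hi⟩ : Fin (n+m))).val < n from h2),
          bigmap_ge g (show ¬ i.val < n from h2)]
        exact finape g rfl
    · rw [cmap_ge _ _ hi]
      rw [bigmap_lt _ (show (Fin.castLE (Nat.le_add_right n m) (g (Fin.last m))).val < n
        from (g (Fin.last m)).isLt)]
      rw [bigmap_ge g (show ¬ i.val < n by omega)]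
      apply Fin.ext
      show (g (Fin.last m)).val = (g ⟨i.val - n, by omega⟩).val
      exact congrArg Fin.val (finape g (show m = i.val - n by omega))
/-- The constructions `S` (from abstract clones to substitution algebras) and
`C` (from substitution algebras to abstract clones) are mutually inverse on
objects. -/
theorem clone_subalg_inverse :
    -- C ∘ S = Id on abstract clones
    (∀ (K : AbstractClone) (m n : ℕ) (t : K.C m) (u : Fin m → K.C n),
      muGen K.C K.act K.sub m n t u = K.comp m n t u) ∧
    (∀ (K : AbstractClone) (m : ℕ) (i : Fin m),
      iotaGen K.C K.act (fun m => K.proj (m+1) (Fin.last m)) m i = K.proj m i) ∧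
    -- S ∘ C = Id on substitution algebras
    (∀ (S : SubstitutionAlgebra) (m n : ℕ) (f : Fin m → Fin n) (x : S.A m),
      muGen S.A S.act S.s m n x (fun i => iotaGen S.A S.act S.v n (f i)) = S.act m n f x) ∧
    (∀ (S : SubstitutionAlgebra) (m : ℕ) (t : S.A (m+1)) (u : S.A m),
      muGen S.A S.act S.s (m+1) m t (Fin.snoc (iotaGen S.A S.act S.v m) u) = S.s m t u) ∧
    (∀ (S : SubstitutionAlgebra) (m : ℕ),
      iotaGen S.A S.act S.v (m+1) (Fin.last m) = S.v m) := by
  refine ⟨?_, ?_, ?_, ?_, fun S m => iota_last S m⟩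
  · -- clone: muGen = comp
    intro K m n t u
    unfold muGen
    rw [clone_phi]
    simp only [AbstractClone.act]
    rw [K.assoc]
    congr 1
    funext i
    rw [K.left_unit]
    rw [dif_neg (show ¬ ((⟨n + i.val, by omega⟩ : Fin (n+m))).val < n by show ¬ n + i.val < n; omega)]
    exact finape u (show (⟨n + i.val, by omega⟩ : Fin (n+m)).val - n = i.val by
      show n + i.val - n = i.val; omega)
  · -- clone: iotaGen = proj
    intro K m i
    show K.comp 1 m (K.proj 1 (Fin.last 0)) (fun _ => K.proj m i) = _
    rw [K.left_unit]
  · -- subalg: muGen on iotas = act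
    intro S m n f x
    unfold muGen
    rw [phi_iota_s17 S m n _ f _ (fun i => rfl)]
    rw [← S.act_comp]
    congr 1
    funext i
    show bigmap m n f (⟨n + i.val, by omega⟩ : Fin (n+m)) = f i
    rw [bigmap_ge f (show ¬ ((⟨n + i.val, by omega⟩ : Fin (n+m))).val < n by
      show ¬ n + i.val < n; omega)]
    exact finape f (show (⟨n + i.val, by omega⟩ : Fin (n+m)).val - n = i.val by
      show n + i.val - n = i.val; omega)
  · -- subalg: muGen recovers s
    intro S m t u
    unfold muGen
    have unf : ∀ (x : S.A (m+(m+1))) (w : Fin (m+1) → S.A m),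
        phiGen S.A S.act S.s (m+1) m x w
          = phiGen S.A S.act S.s m m
              (S.s (m+m) x (S.act m (m+m) (Fin.castLE (Nat.le_add_right m m)) (w (Fin.last m))))
              (fun i => w i.castSucc) := fun _ _ => rfl
    rw [unf]
    rw [Fin.snoc_last]
    have hw : ∀ i : Fin m,
        (Fin.snoc (iotaGen S.A S.act S.v m) u : Fin (m+1) → S.A m) i.castSucc
          = iotaGen S.A S.act S.v m (id i) := fun i => by rw [Fin.snoc_castSucc]; rfl
    rw [phi_iota_s17 S m m _ id
      (fun i => (Fin.snoc (iotaGen S.A S.act S.v m) u : Fin (m+1) → S.A m) i.castSucc) hw]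
    rw [S.s_nat]
    have h1 : S.act (m+m+1) (m+1) (ext (bigmap m m id))
        (S.act (m+1) (m+(m+1)) (fun i => ⟨m + i.val, by omega⟩) t) = t := by
      show S.act (m+m+1) (m+1) (ext (bigmap m m id))
        (S.act (m+1) (m+m+1) (fun i => ⟨m + i.val, by omega⟩) t) = t
      rw [← S.act_comp]
      have hc : (ext (bigmap m m id) ∘ fun i : Fin (m+1) =>
          (⟨m + i.val, by omega⟩ : Fin (m+m+1))) = id := by
        funext i
        have hik := i.isLt
        apply Fin.ext
        show (ext (bigmap m m id) (⟨m + i.val, by omega⟩ : Fin (m+m+1))).val = i.val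
        rw [ext_val]
        by_cases h : i.val < m
        · rw [dif_pos (show ((⟨m + i.val, by omega⟩ : Fin (m+m+1))).val < m+m by
            show m + i.val < m+m; omega)]
          rw [bigmap_ge id (show ¬ ((⟨m + i.val, by omega⟩ : Fin (m+m))).val < m by
            show ¬ m + i.val < m; omega)]
          show m + i.val - m = i.val
          omega
        · rw [dif_neg (show ¬ ((⟨m + i.val, by omega⟩ : Fin (m+m+1))).val < m+m by
            show ¬ m + i.val < m+m; omega)]
          omega
      rw [hc, S.act_id]
    have h2 : S.act (m+m) m (bigmap m m id)
        (S.act m (m+m) (Fin.castLE (Nat.le_add_right m m)) u) = u := by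
      rw [← S.act_comp]
      have hc : (bigmap m m id ∘ Fin.castLE (Nat.le_add_right m m) : Fin m → Fin m) = id := by
        funext i
        show bigmap m m id (Fin.castLE (Nat.le_add_right m m) i) = i
        rw [bigmap_lt id (show (Fin.castLE (Nat.le_add_right m m) i).val < m from i.isLt)]
        exact Fin.ext rfl
      rw [hc, S.act_id]
    rw [h1, h2]
end
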